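/- (S_1, S_start, {1}, [0, ∞))↓ holds: from every configuration in which robot r is in state S_1 with observed distance exactly 1 and robot s is in state S_start with any observed distance, every fair SSynch execution of Algorithm 1 solves rendezvous. -/

import Mathlib

/-- Points in the plane. -/
abbrev Pt := EuclideanSpace ℝ (Fin 2)

/-- Observed directions. -/
inductive Dir | left | right
deriving DecidableEq

/-- The six internal states of Algorithm 1. -/
inductive St | start | s1 | s2 (d : Dir) | s3 | finish
deriving DecidableEq

/-- A local coordinate frame: an orthogonal linear map of the plane. -/
abbrev Frame := Pt ≃ₗᵢ[ℝ] Pt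

/-- Observed direction of a local vector `v`: `right` if its first coordinate is
positive, or is zero with positive second coordinate; `left` otherwise. -/
noncomputable def obsDir (v : Pt) : Dir :=
  if 0 < v 0 ∨ (v 0 = 0 ∧ 0 < v 1) then Dir.right else Dir.left

/-- Local vector observed by a robot with unit distance `u` and frame `A`,
located at `p`, looking at the other robot at `q`. -/
noncomputable def obsVec (u : ℝ) (A : Frame) (p q : Pt) : Pt := u⁻¹ • (A (q - p))

/-- Observed distance. -/
noncomputable def obsDist (u : ℝ) (p q : Pt) : ℝ := ‖q - p‖ / u

/-- Algorithm 1: given the current state, the observed distance `d` and the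
observed direction `dir`, returns the new state and the coefficient `μ` such
that the (global) destination is `p + μ • (q - p)` (i.e. local destination `μ • v`). -/
noncomputable def algo1 (s : St) (d : ℝ) (dir : Dir) : St × ℝ :=
  if d = 0 then (s, 0)
  else match s with
  | .start => if d < 1 then (.s1, 1 - 1/d) else (.s2 dir, 1)
  | .s1 => if d ≤ 1 then (.finish, 0) else (.s2 dir, 1)
  | .s2 d' =>
      if dir = d' then (.finish, 1)
      else if d < 1/2 then (.finish, 0)
      else if d < 1 then (.s3, 1/2)
      else (.s2 d', 1/2)
  | .s3 => if d < 1/4 then (.finish, 0) else (.finish, 1)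
  | .finish => if d ≤ 1 then (.finish, 0) else (.finish, 1)

/-- A configuration: positions and internal states of the two robots
(robot `r` is `false`, robot `s` is `true`). -/
structure Config where
  pos : Bool → Pt
  st : Bool → St

/-- Result (new position, new state) of one activation of robot `i`. -/
noncomputable def stepRobot (u : Bool → ℝ) (A : Bool → Frame) (c : Config) (i : Bool) :
    Pt × St :=
  let p := c.pos i
  let q := c.pos (!i)
  let d := obsDist (u i) p q
  let dir := obsDir (obsVec (u i) (A i) p q)
  let r := algo1 (c.st i) d dir
  (p + r.2 • (q - p), r.1)

/-- One synchronous round in which exactly the robots `i` with `act i = true`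
are activated; both activated robots observe the same (pre-round) configuration,
and rigidly reach their computed destinations. -/
noncomputable def stepConfig (u : Bool → ℝ) (A : Bool → Frame) (act : Bool → Bool)
    (c : Config) : Config where
  pos i := if act i then (stepRobot u A c i).1 else c.pos i
  st i := if act i then (stepRobot u A c i).2 else c.st i

/-- The configuration after `n` rounds of the SSynch execution of Algorithm 1
under schedule `sched`, starting from `c0`. -/
noncomputable def run (u : Bool → ℝ) (A : Bool → Frame) (sched : ℕ → Bool → Bool)
    (c0 : Config) : ℕ → Config
  | 0 => c0
  | n + 1 => stepConfig u A (sched n) (run u A sched c0 n)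

/-- A legal fair SSynch schedule: at every round a nonempty set of robots is
activated, and each robot is activated infinitely often. -/
def FairSched (sched : ℕ → Bool → Bool) : Prop :=
  (∀ n, sched n false = true ∨ sched n true = true) ∧
  (∀ i n, ∃ m, n ≤ m ∧ sched m i = true)

/-- Rendezvous is solved: from some round on, the two robots occupy the same
point and never move again. -/
noncomputable def Solves (u : Bool → ℝ) (A : Bool → Frame) (sched : ℕ → Bool → Bool)
    (c0 : Config) : Prop :=
  ∃ N : ℕ, ∀ n, N ≤ n → ∀ i, (run u A sched c0 n).pos i = (run u A sched c0 N).pos false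

/-- Conditions on a robot: one of the six internal states, or `S₂⁼` / `S₂≠`. -/
inductive Cond | start | s1 | s2 (d : Dir) | s2eq | s2ne | s3 | finish

/-- A robot in state `s` whose currently observed direction is `dir`
satisfies the condition. -/
def Cond.sat : Cond → St → Dir → Prop
  | .start, s, _ => s = .start
  | .s1, s, _ => s = .s1
  | .s2 d', s, _ => s = .s2 d'
  | .s2eq, s, dir => s = .s2 dir
  | .s2ne, s, dir => ∃ d', s = St.s2 d' ∧ d' ≠ dir
  | .s3, s, _ => s = .s3
  | .finish, s, _ => s = .finish

/-- `(S_a, S_b, I_a, I_b)↓` : for every choice of the units and frames, from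
every configuration in which robot `r` satisfies condition `Ca` with observed
distance in `Ia` and robot `s` satisfies condition `Cb` with observed distance
in `Ib`, every fair SSynch execution of Algorithm 1 solves Rendezvous. -/
noncomputable def Down (Ca Cb : Cond) (Ia Ib : Set ℝ) : Prop :=
  ∀ (u : Bool → ℝ) (A : Bool → Frame), (∀ i, 0 < u i) →
    ∀ c0 : Config,
      Ca.sat (c0.st false)
        (obsDir (obsVec (u false) (A false) (c0.pos false) (c0.pos true))) →
      obsDist (u false) (c0.pos false) (c0.pos true) ∈ Ia →
      Cb.sat (c0.st true)
        (obsDir (obsVec (u true) (A true) (c0.pos true) (c0.pos false))) →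
      obsDist (u true) (c0.pos true) (c0.pos false) ∈ Ib →
      ∀ sched : ℕ → Bool → Bool, FairSched sched → Solves u A sched c0

/-!
Robot `r` sees `s` at distance one in state `S_1`, so it stays put until `s` is first activated.
At that round `s` either jumps onto `r` (observed distance at least one), or retreats to the
point at which it observes `r` at distance exactly one. In the second case `r` observes `s`
at distance `u_s / u_r > 1`, so `s` now waits in `S_1` while `r` jumps onto it at its next
activation. Once the robots coincide every destination is the common point.
-/

lemma obsDist_swap {u : ℝ} (hu : u ≠ 0) (u' : ℝ) (p q : Pt) :
    obsDist u' q p = obsDist u p q * (u / u') := by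
  rw [obsDist, obsDist, norm_sub_rev, div_mul_div_comm, mul_comm u u', mul_div_mul_right _ _ hu]

/-- In these states a robot stays put at observed distance at most one and otherwise jumps onto
the other robot. -/
def St.IsPassive (s : St) : Prop := s = .s1 ∨ s = .finish

def Waiting (u : Bool → ℝ) (c : Config) (i : Bool) : Prop :=
  (c.st i).IsPassive ∧ obsDist (u i) (c.pos i) (c.pos (!i)) = 1

section Step

variable {u : Bool → ℝ} {A : Bool → Frame} {c : Config} {i : Bool}

lemma stepRobot_of_waiting (h : Waiting u c i) : stepRobot u A c i = (c.pos i, .finish) := by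
  obtain ⟨hst | hst, hd⟩ := h <;> simp [stepRobot, hst, hd, algo1]

lemma stepRobot_fst_of_isPassive_of_one_lt (hst : (c.st i).IsPassive)
    (hd : 1 < obsDist (u i) (c.pos i) (c.pos (!i))) : (stepRobot u A c i).1 = c.pos (!i) := by
  have hd0 : obsDist (u i) (c.pos i) (c.pos (!i)) ≠ 0 := by positivity
  rcases hst with hst | hst <;> simp [stepRobot, hst, hd0, not_le.mpr hd, algo1]

lemma stepRobot_fst_of_start_of_one_le (hst : c.st i = .start)
    (hd : 1 ≤ obsDist (u i) (c.pos i) (c.pos (!i))) : (stepRobot u A c i).1 = c.pos (!i) := by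
  have hd0 : obsDist (u i) (c.pos i) (c.pos (!i)) ≠ 0 := by positivity
  simp [stepRobot, hst, hd0, not_lt.mpr hd, algo1]

lemma stepRobot_of_start_of_lt_one (hu : 0 < u i) (hst : c.st i = .start)
    (hd0 : 0 < obsDist (u i) (c.pos i) (c.pos (!i)))
    (hd1 : obsDist (u i) (c.pos i) (c.pos (!i)) < 1) :
    ‖(stepRobot u A c i).1 - c.pos (!i)‖ = u i ∧ (stepRobot u A c i).2 = .s1 := by
  set d := obsDist (u i) (c.pos i) (c.pos (!i)) with hd
  have hstep : stepRobot u A c i = (c.pos i + (1 - 1 / d) • (c.pos (!i) - c.pos i), .s1) := by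
    simp [stepRobot, hst, ← hd, hd0.ne', hd1, algo1]
  have hnorm : ‖c.pos (!i) - c.pos i‖ = d * u i := by
    rw [hd, obsDist, div_mul_cancel₀ _ hu.ne']
  refine ⟨?_, by rw [hstep]⟩
  calc ‖(stepRobot u A c i).1 - c.pos (!i)‖
      = ‖(-(1 / d)) • (c.pos (!i) - c.pos i)‖ := by rw [hstep]; congr 1; module
    _ = u i := by
      rw [norm_smul, hnorm, norm_neg, Real.norm_of_nonneg (by positivity)]
      field_simp

end Step

section Config

variable {u : Bool → ℝ} {A : Bool → Frame} {act : Bool → Bool} {c : Config}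

lemma stepConfig_pos_of_pos_eq (h : c.pos true = c.pos false) :
    (stepConfig u A act c).pos = c.pos := by
  funext i
  cases i <;> simp [stepConfig, stepRobot, h]

lemma stepConfig_pos_of_waiting {w : Bool} (hw : Waiting u c w) :
    (stepConfig u A act c).pos w = c.pos w := by
  simp [stepConfig, stepRobot_of_waiting hw]

lemma stepConfig_st_isPassive_of_waiting {w : Bool} (hw : Waiting u c w) :
    ((stepConfig u A act c).st w).IsPassive := by
  by_cases hw' : act w
  · simp [stepConfig, hw', stepRobot_of_waiting hw, St.IsPassive]
  · simpa [stepConfig, hw'] using hw.1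

lemma stepConfig_of_waiting {w : Bool} (hw : Waiting u c w) (hact : act (!w) = false) :
    (stepConfig u A act c).pos = c.pos ∧ Waiting u (stepConfig u A act c) w ∧
      (stepConfig u A act c).st (!w) = c.st (!w) := by
  have hpos : (stepConfig u A act c).pos = c.pos := by
    funext i
    rcases Bool.eq_or_eq_not i w with rfl | rfl
    · exact stepConfig_pos_of_waiting hw
    · simp [stepConfig, hact]
  refine ⟨hpos, ⟨stepConfig_st_isPassive_of_waiting hw, by rw [hpos]; exact hw.2⟩, ?_⟩
  simp [stepConfig, hact]

lemma stepConfig_of_start_of_lt_one {i : Bool} (hu : 0 < u i) (hw : Waiting u c (!i))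
    (hact : act i = true) (hst : c.st i = .start)
    (hd0 : 0 < obsDist (u i) (c.pos i) (c.pos (!i)))
    (hd1 : obsDist (u i) (c.pos i) (c.pos (!i)) < 1) :
    Waiting u (stepConfig u A act c) i ∧ ((stepConfig u A act c).st (!i)).IsPassive := by
  obtain ⟨hnorm, hs1⟩ := stepRobot_of_start_of_lt_one (A := A) hu hst hd0 hd1
  have hpos : (stepConfig u A act c).pos i = (stepRobot u A c i).1 := by
    simp [stepConfig, hact]
  refine ⟨⟨Or.inl (by simp [stepConfig, hact, hs1]), ?_⟩,
    stepConfig_st_isPassive_of_waiting hw⟩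
  rw [obsDist, stepConfig_pos_of_waiting hw, hpos, norm_sub_rev, hnorm, div_self hu.ne']

lemma stepConfig_pos_eq_of_waiting {w : Bool} (hw : Waiting u c w) (hact : act (!w) = true)
    (hjump : (stepRobot u A c (!w)).1 = c.pos w) :
    (stepConfig u A act c).pos true = (stepConfig u A act c).pos false := by
  have hpos : ∀ i, (stepConfig u A act c).pos i = c.pos w := by
    intro i
    rcases Bool.eq_or_eq_not i w with rfl | rfl
    · exact stepConfig_pos_of_waiting hw
    · simpa [stepConfig, hact] using hjump
  rw [hpos, hpos]

end Config

section Run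

variable {u : Bool → ℝ} {A : Bool → Frame} {sched : ℕ → Bool → Bool} {c0 : Config}

lemma solves_of_pos_eq {N : ℕ}
    (h : (run u A sched c0 N).pos true = (run u A sched c0 N).pos false) :
    Solves u A sched c0 := by
  have hfix : ∀ n, N ≤ n → (run u A sched c0 n).pos = (run u A sched c0 N).pos := by
    intro n hn
    induction n, hn using Nat.le_induction with
    | base => rfl
    | succ n _ ih =>
      rw [run, stepConfig_pos_of_pos_eq (by rw [ih, h]), ih]
  refine ⟨N, fun n hn i => ?_⟩
  rw [hfix n hn]
  cases i
  · rfl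
  · exact h

lemma run_add_of_waiting {n : ℕ} {w : Bool} (hw : Waiting u (run u A sched c0 n) w) (k : ℕ)
    (hidle : ∀ l < k, sched (n + l) (!w) = false) :
    (run u A sched c0 (n + k)).pos = (run u A sched c0 n).pos ∧
      Waiting u (run u A sched c0 (n + k)) w ∧
      (run u A sched c0 (n + k)).st (!w) = (run u A sched c0 n).st (!w) := by
  induction k with
  | zero => exact ⟨rfl, hw, rfl⟩
  | succ k ih =>
    obtain ⟨hpos, hwk, hst⟩ := ih fun l hl => hidle l (by omega)
    obtain ⟨hpos', hw', hst'⟩ := stepConfig_of_waiting (A := A) hwk (hidle k (by omega))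
    rw [← add_assoc, run]
    exact ⟨hpos'.trans hpos, hw', hst'.trans hst⟩

lemma FairSched.exists_first_activation (hfair : FairSched sched) (i : Bool) (n : ℕ) :
    ∃ k, sched (n + k) i = true ∧ ∀ l < k, sched (n + l) i = false := by
  have hex : ∃ k, sched (n + k) i = true := by
    obtain ⟨m, hnm, hm⟩ := hfair.2 i n
    exact ⟨m - n, by rwa [Nat.add_sub_cancel' hnm]⟩
  exact ⟨Nat.find hex, Nat.find_spec hex, fun l hl => by simpa using Nat.find_min hex hl⟩

lemma exists_activation_of_waiting (hfair : FairSched sched) {n : ℕ} {w : Bool}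
    (hw : Waiting u (run u A sched c0 n) w) :
    ∃ k, sched (n + k) (!w) = true ∧
      (run u A sched c0 (n + k)).pos = (run u A sched c0 n).pos ∧
      Waiting u (run u A sched c0 (n + k)) w ∧
      (run u A sched c0 (n + k)).st (!w) = (run u A sched c0 n).st (!w) := by
  obtain ⟨k, hk, hidle⟩ := hfair.exists_first_activation (!w) n
  exact ⟨k, hk, run_add_of_waiting hw k hidle⟩

end Run

/-- Lemma 10: `(S_1, S_start, {1}, [0, ∞))↓`. -/
theorem lemma_l3 :
    Down Cond.s1 Cond.start {(1 : ℝ)} (Set.Ici (0 : ℝ)) := by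
  intro u A hu c0 hr hrd hs _ sched hfair
  obtain ⟨m, hact, hpos, hwm, hst⟩ :=
    exists_activation_of_waiting (A := A) (c0 := c0) (n := 0) (w := false) hfair
      ⟨Or.inl hr, hrd⟩
  rw [zero_add] at hact hpos hwm hst
  have hds : obsDist (u true) ((run u A sched c0 m).pos true) ((run u A sched c0 m).pos false) =
      u false / u true := by
    rw [hpos, run, obsDist_swap (hu false).ne', hrd.out, one_mul]
  rcases le_or_gt 1 (u false / u true) with hfar | hnear
  · exact solves_of_pos_eq (N := m + 1) <| stepConfig_pos_eq_of_waiting hwm hact <|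
      stepRobot_fst_of_start_of_one_le (hst.trans hs) (hds ▸ hfar)
  · obtain ⟨hws, hpr⟩ : Waiting u (run u A sched c0 (m + 1)) true ∧
        ((run u A sched c0 (m + 1)).st false).IsPassive :=
      stepConfig_of_start_of_lt_one (i := true) (hu true) hwm hact (hst.trans hs)
        (hds ▸ div_pos (hu false) (hu true)) (hds ▸ hnear)
    obtain ⟨k, hact', hpos', hws', hst'⟩ :=
      exists_activation_of_waiting (n := m + 1) (w := true) hfair hws
    have hdr : 1 < obsDist (u false) ((run u A sched c0 (m + 1 + k)).pos false)
        ((run u A sched c0 (m + 1 + k)).pos true) := by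
      have hws1 : obsDist (u true) ((run u A sched c0 (m + 1)).pos true)
          ((run u A sched c0 (m + 1)).pos false) = 1 := hws.2
      rw [hpos', obsDist_swap (hu true).ne', hws1, one_mul, one_lt_div (hu false)]
      rwa [div_lt_one (hu true)] at hnear
    exact solves_of_pos_eq (N := m + 1 + k + 1) <| stepConfig_pos_eq_of_waiting hws' hact' <|
      stepRobot_fst_of_isPassive_of_one_lt (hst' ▸ hpr) hdr
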